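/- Let f : Fin m → Fin 2 represent a number N(f) < 2^m − 1 (so some bit is 0). Define g : Fin m → Fin 2 by: g(i) = 1 − f(i) if all bits f(j) with j < i are 1 (including i = 0), and g(i) = f(i) if some bit f(j) with j < i is 0. Then N(g) = N(f) + 1. -/

import Mathlib

def binVal (m : ℕ) (f : Fin m → Fin 2) : ℕ := ∑ i : Fin m, (f i : ℕ) * 2 ^ (i : ℕ)

/-!
Induction on the number of bits, peeling off the least significant one. If `f 0 = 0`, the
increment sets that bit and leaves the others alone. If `f 0 = 1`, it clears that bit and
increments the remaining bits, whose value is again below its maximum because `N(f)` is.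
-/

lemma binVal_succ (m : ℕ) (f : Fin (m + 1) → Fin 2) :
    binVal (m + 1) f = f 0 + 2 * binVal m (Fin.tail f) := by
  simp only [binVal, Fin.sum_univ_succ, Fin.val_zero, pow_zero, mul_one, Fin.val_succ,
    pow_succ, Finset.mul_sum, Fin.tail]
  congr 1
  exact Finset.sum_congr rfl fun i _ => by ring

theorem succ_correct (m : ℕ) (f g : Fin m → Fin 2)
    (hlt : binVal m f < 2 ^ m - 1)
    (hflip : ∀ i : Fin m, (∀ j : Fin m, j < i → f j = 1) → (g i : ℕ) = 1 - (f i : ℕ))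
    (hkeep : ∀ i : Fin m, (∃ j : Fin m, j < i ∧ f j = 0) → g i = f i) :
    binVal m g = binVal m f + 1 := by
  induction m with
  | zero => simp [binVal] at hlt
  | succ m ih =>
    have hg0 := hflip 0 fun j hj => absurd hj (Fin.not_lt_zero j)
    simp only [binVal_succ] at hlt ⊢
    obtain hf0 | hf0 : f 0 = 0 ∨ f 0 = 1 := by omega
    · have htail : Fin.tail g = Fin.tail f :=
        funext fun i => hkeep i.succ ⟨0, Fin.succ_pos i, hf0⟩
      rw [hf0, Fin.val_zero] at hg0
      rw [htail, hf0, Fin.val_zero]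
      omega
    · have hlt_tail : binVal m (Fin.tail f) < 2 ^ m - 1 := by
        rw [hf0, Fin.val_one, pow_succ] at hlt
        omega
      have hg_tail := ih (Fin.tail f) (Fin.tail g) hlt_tail
        (fun i hi => hflip i.succ fun j hj => by
          cases j using Fin.cases with
          | zero => exact hf0
          | succ j => exact hi j (Fin.succ_lt_succ_iff.mp hj))
        (fun i ⟨j, hj, hfj⟩ => hkeep i.succ ⟨j.succ, Fin.succ_lt_succ_iff.mpr hj, hfj⟩)
      rw [hg_tail]
      simp only [hf0, Fin.val_one] at hg0 ⊢
      omega
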